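/- Exponential convergence rate of the heavy ball method under quadratic growth: let m ∈ (0,1), set ψ := mαγ/λ, assume ψ < λ (so that ν := ψ(ψ - λ) < 0), and set κ := min{(1 - m)ψ, 2(λ - ψ)} > 0. Then every solution of the heavy ball system satisfies V(z₁(t), z₂(t)) ≤ V(z₁(0), z₂(0))·e^{-κ t} for all t ≥ 0, and consequently L(z₁(t)) - L* ≤ (V(z₁(0), z₂(0)) / ((1 - m)γ))·e^{-κ t} for all t ≥ 0. -/

import Mathlib

/-!
With `e = z₁ - z*`, the derivative of `V` along a trajectory is
`-ψγ⟪∇L(z₁), e⟫ + (ψ - λ)‖ψe + z₂‖² - ψ²(ψ - λ)‖e‖²`. Convexity bounds `⟪∇L(z₁), e⟫` below by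
`L(z₁) - L*`, and quadratic growth with `mαγ = ψλ` turns part of that into `ψ²λ‖e‖²`, which
absorbs the negative `ν`-terms; the choice of `κ` then makes `V' + κV ≤ 0`, and Grönwall gives
the decay of `V`. Quadratic growth also shows `V ≥ (1 - m)γ(L - L*)` although `ν < 0`.
-/

open scoped RealInnerProductSpace

section

variable {E : Type*} [NormedAddCommGroup E] [InnerProductSpace ℝ E]

theorem HasGradientAt.comp_hasDerivAt [CompleteSpace E] {f : E → ℝ} {g : E} {x : ℝ → E}
    {x' : E} {t : ℝ} (hf : HasGradientAt f g (x t)) (hx : HasDerivAt x x' t) :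
    HasDerivAt (fun s => f (x s)) ⟪g, x'⟫ t :=
  (hasGradientAt_iff_hasFDerivAt.mp hf).comp_hasDerivAt t hx

theorem ConvexOn.sub_le_inner_of_hasGradientAt [CompleteSpace E] {f : E → ℝ} {g x y : E}
    (hconv : ConvexOn ℝ Set.univ f) (hf : HasGradientAt f g x) :
    f x - f y ≤ ⟪g, x - y⟫ := by
  let line : ℝ →ᵃ[ℝ] E := AffineMap.lineMap x y
  have hline : HasDerivAt (f ∘ line) ⟪g, y - x⟫ 0 :=
    HasGradientAt.comp_hasDerivAt (x := line) (by simpa [line] using hf)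
      AffineMap.hasDerivAt_lineMap
  have hslope := (hconv.comp_affineMap line).le_slope_of_hasDerivAt
    (Set.mem_univ 0) (Set.mem_univ 1) one_pos hline
  have hflip : ⟪g, x - y⟫ = -⟪g, y - x⟫ := by rw [← inner_neg_right, neg_sub]
  simp [slope_def_field, line] at hslope
  linarith

noncomputable def heavyBallLyapunov (L : E → ℝ) (zs : E) (γ lam ψ : ℝ) (x v : E) : ℝ :=
  γ * (L x - L zs) + (1 / 2) * ‖ψ • (x - zs) + v‖ ^ 2 + (ψ * (ψ - lam) / 2) * ‖x - zs‖ ^ 2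

theorem hasDerivAt_heavyBallLyapunov [CompleteSpace E] {L : E → ℝ} {zs : E} {γ lam ψ : ℝ}
    {x v : ℝ → E} {t : ℝ} (hL : DifferentiableAt ℝ L (x t)) (hx : HasDerivAt x (v t) t)
    (hv : HasDerivAt v (-(lam • v t) - γ • gradient L (x t)) t) :
    HasDerivAt (fun s => heavyBallLyapunov L zs γ lam ψ (x s) (v s))
      (-(ψ * γ) * ⟪gradient L (x t), x t - zs⟫ + (ψ - lam) * ‖ψ • (x t - zs) + v t‖ ^ 2
        - ψ ^ 2 * (ψ - lam) * ‖x t - zs‖ ^ 2) t := by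
  have hLx := (hL.hasGradientAt.comp_hasDerivAt hx).sub_const (L zs)
  have hw := ((hx.sub_const zs).const_smul ψ).add hv
  have he := hx.sub_const zs
  refine (((hLx.const_mul γ).add (hw.norm_sq.const_mul (1 / 2))).add
    (he.norm_sq.const_mul (ψ * (ψ - lam) / 2))).congr_deriv ?_
  simp only [Pi.add_apply, Pi.smul_apply, norm_add_sq_real, norm_smul, Real.norm_eq_abs,
    mul_pow, sq_abs, inner_add_left, inner_add_right, inner_sub_left, inner_sub_right,
    inner_neg_right, real_inner_smul_left, real_inner_smul_right, real_inner_self_eq_norm_sq,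
    real_inner_comm (v t), real_inner_comm (x t) (gradient L (x t)),
    real_inner_comm zs (gradient L (x t))]
  ring

theorem heavyBallLyapunov_deriv_add_mul_le {L : E → ℝ} {zs x v g : E} {α γ lam m ψ κ : ℝ}
    (hconv : L x - L zs ≤ ⟪g, x - zs⟫) (hQG : α * ‖x - zs‖ ^ 2 ≤ L x - L zs)
    (hα : 0 ≤ α) (hγ : 0 ≤ γ) (hm : 0 ≤ m) (hψ : 0 ≤ ψ) (hψlam : ψ ≤ lam)
    (hmψ : m * α * γ = ψ * lam) (hκ : 0 ≤ κ) (hκψ : κ ≤ (1 - m) * ψ)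
    (hκlam : κ ≤ 2 * (lam - ψ)) :
    -(ψ * γ) * ⟪g, x - zs⟫ + (ψ - lam) * ‖ψ • (x - zs) + v‖ ^ 2
        - ψ ^ 2 * (ψ - lam) * ‖x - zs‖ ^ 2 + κ * heavyBallLyapunov L zs γ lam ψ x v ≤ 0 := by
  unfold heavyBallLyapunov
  set a := ‖x - zs‖ ^ 2
  set W := ‖ψ • (x - zs) + v‖ ^ 2
  have ha : 0 ≤ a := by positivity
  have hW : 0 ≤ W := by positivity
  have hP : 0 ≤ L x - L zs := (mul_nonneg hα ha).trans hQG
  have hgrad : ψ * γ * (L x - L zs) ≤ ψ * γ * ⟪g, x - zs⟫ := by gcongr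
  have hgrowth : ψ * (ψ * lam) * a ≤ (ψ - κ) * γ * (L x - L zs) :=
    calc ψ * (ψ * lam) * a = m * ψ * γ * (α * a) := by rw [← hmψ]; ring
      _ ≤ m * ψ * γ * (L x - L zs) := by gcongr
      _ ≤ (ψ - κ) * γ * (L x - L zs) := by gcongr; linarith
  nlinarith [mul_nonneg (mul_nonneg hκ hψ) (mul_nonneg (sub_nonneg.2 hψlam) ha),
    mul_nonneg (pow_nonneg hψ 3) ha, mul_nonneg (by linarith : 0 ≤ lam - ψ - κ / 2) hW]

theorem mul_sub_le_heavyBallLyapunov {L : E → ℝ} {zs x : E} (v : E) {α γ lam m ψ : ℝ}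
    (hQG : α * ‖x - zs‖ ^ 2 ≤ L x - L zs) (hm : 0 ≤ m) (hγ : 0 ≤ γ) (hψ : 0 ≤ ψ)
    (hlam : 0 ≤ lam) (hmψ : m * α * γ = ψ * lam) :
    (1 - m) * γ * (L x - L zs) ≤ heavyBallLyapunov L zs γ lam ψ x v := by
  unfold heavyBallLyapunov
  have ha : 0 ≤ ‖x - zs‖ ^ 2 := by positivity
  have hW : 0 ≤ ‖ψ • (x - zs) + v‖ ^ 2 := by positivity
  have hgrowth : ψ * lam * ‖x - zs‖ ^ 2 ≤ m * γ * (L x - L zs) :=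
    calc ψ * lam * ‖x - zs‖ ^ 2 = m * γ * (α * ‖x - zs‖ ^ 2) := by rw [← hmψ]; ring
      _ ≤ m * γ * (L x - L zs) := by gcongr
  nlinarith [mul_nonneg (mul_nonneg hψ (add_nonneg hlam hψ)) ha]

end

theorem le_mul_exp_of_hasDerivAt_le_mul {f f' : ℝ → ℝ} {K : ℝ}
    (hf : ∀ t, 0 ≤ t → HasDerivAt f (f' t) t) (hbound : ∀ t, 0 ≤ t → f' t ≤ K * f t)
    {t : ℝ} (ht : 0 ≤ t) : f t ≤ f 0 * Real.exp (K * t) := by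
  have h := le_gronwallBound_of_liminf_deriv_right_le (f := f) (f' := f') (δ := f 0) (K := K)
    (ε := 0) (a := 0) (b := t)
    (fun s hs => (hf s hs.1).continuousAt.continuousWithinAt)
    (fun s hs _ hr => (hf s hs.1).hasDerivWithinAt.liminf_right_slope_le hr) le_rfl
    (fun s hs => by simpa using hbound s hs.1) t ⟨ht, le_rfl⟩
  simpa [gronwallBound_ε0] using h

theorem heavyBall_exponential_rate_general {n : ℕ}
    (L : EuclideanSpace ℝ (Fin n) → ℝ)
    (hC1 : ContDiff ℝ 1 L)
    (hconv : ConvexOn ℝ Set.univ L)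
    (zs : EuclideanSpace ℝ (Fin n))
    (α : ℝ) (hα : 0 < α)
    (hQG : ∀ z, α * ‖z - zs‖ ^ 2 ≤ L z - L zs)
    (lam γ m : ℝ) (hlam : 0 < lam) (hγ : 0 < γ) (hm0 : 0 < m) (hm1 : m < 1)
    (hψlt : m * α * γ / lam < lam)
    (z₁ z₂ : ℝ → EuclideanSpace ℝ (Fin n))
    (hz₁ : ∀ t, 0 ≤ t → HasDerivAt z₁ (z₂ t) t)
    (hz₂ : ∀ t, 0 ≤ t →
      HasDerivAt z₂ (-(lam • z₂ t) - γ • gradient L (z₁ t)) t) :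
    ∀ t, 0 ≤ t →
      (γ * (L (z₁ t) - L zs)
          + (1 / 2) * ‖(m * α * γ / lam) • (z₁ t - zs) + z₂ t‖ ^ 2
          + ((m * α * γ / lam) * ((m * α * γ / lam) - lam) / 2)
              * ‖z₁ t - zs‖ ^ 2)
        ≤ (γ * (L (z₁ 0) - L zs)
            + (1 / 2) * ‖(m * α * γ / lam) • (z₁ 0 - zs) + z₂ 0‖ ^ 2
            + ((m * α * γ / lam) * ((m * α * γ / lam) - lam) / 2)
                * ‖z₁ 0 - zs‖ ^ 2)
          * Real.exp
              (-(min ((1 - m) * (m * α * γ / lam)) (2 * (lam - m * α * γ / lam)))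
                * t) ∧
      L (z₁ t) - L zs
        ≤ ((γ * (L (z₁ 0) - L zs)
            + (1 / 2) * ‖(m * α * γ / lam) • (z₁ 0 - zs) + z₂ 0‖ ^ 2
            + ((m * α * γ / lam) * ((m * α * γ / lam) - lam) / 2)
                * ‖z₁ 0 - zs‖ ^ 2) / ((1 - m) * γ))
          * Real.exp
              (-(min ((1 - m) * (m * α * γ / lam)) (2 * (lam - m * α * γ / lam)))
                * t) := by
  set ψ := m * α * γ / lam with hψdef
  set κ := min ((1 - m) * ψ) (2 * (lam - ψ))
  have hψ : 0 < ψ := by positivity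
  have hmψ : m * α * γ = ψ * lam := by rw [hψdef]; field_simp
  have hκ : 0 ≤ κ := le_min (mul_nonneg (by linarith) hψ.le) (by linarith)
  have hL : Differentiable ℝ L := hC1.differentiable one_ne_zero
  have hdecay : ∀ t, 0 ≤ t → heavyBallLyapunov L zs γ lam ψ (z₁ t) (z₂ t)
      ≤ heavyBallLyapunov L zs γ lam ψ (z₁ 0) (z₂ 0) * Real.exp (-κ * t) := by
    refine fun t ht => le_mul_exp_of_hasDerivAt_le_mul
      (fun s hs => hasDerivAt_heavyBallLyapunov (hL _) (hz₁ s hs) (hz₂ s hs)) (fun s _ => ?_) ht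
    have hdissip := heavyBallLyapunov_deriv_add_mul_le (v := z₂ s)
      (hconv.sub_le_inner_of_hasGradientAt (hL _).hasGradientAt) (hQG (z₁ s)) hα.le hγ.le
      hm0.le hψ.le hψlt.le hmψ hκ (min_le_left _ _) (min_le_right _ _)
    linarith
  intro t ht
  refine ⟨hdecay t ht, ?_⟩
  have hlow := mul_sub_le_heavyBallLyapunov (z₂ t) (hQG (z₁ t)) hm0.le hγ.le hψ.le hlam.le hmψ
  show _ ≤ heavyBallLyapunov L zs γ lam ψ (z₁ 0) (z₂ 0) / ((1 - m) * γ) * Real.exp (-κ * t)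
  rw [div_mul_eq_mul_div, le_div_iff₀ (mul_pos (by linarith) hγ)]
  linarith [hdecay t ht]

/-- Exponential convergence of the heavy ball method under quadratic growth:
with `ψ = mαγ/λ < λ` and `κ = min{(1-m)ψ, 2(λ-ψ)}`, every solution satisfies
`V(z(t)) ≤ V(z(0)) e^{-κt}` and `L(z₁(t)) - L* ≤ (V(z(0))/((1-m)γ)) e^{-κt}`. -/
theorem heavyBall_exponential_rate {n : ℕ} (hn : 1 ≤ n)
    (L : EuclideanSpace ℝ (Fin n) → ℝ)
    (hC1 : ContDiff ℝ 1 L)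
    (hconv : ConvexOn ℝ Set.univ L)
    (zs : EuclideanSpace ℝ (Fin n))
    (hmin : ∀ z, L zs ≤ L z)
    (huniq : ∀ z, (∀ y, L z ≤ L y) → z = zs)
    (α : ℝ) (hα : 0 < α)
    (hQG : ∀ z, α * ‖z - zs‖ ^ 2 ≤ L z - L zs)
    (lam γ m : ℝ) (hlam : 0 < lam) (hγ : 0 < γ) (hm0 : 0 < m) (hm1 : m < 1)
    (hψlt : m * α * γ / lam < lam)
    (z₁ z₂ : ℝ → EuclideanSpace ℝ (Fin n))
    (hz₁ : ∀ t, 0 ≤ t → HasDerivAt z₁ (z₂ t) t)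
    (hz₂ : ∀ t, 0 ≤ t →
      HasDerivAt z₂ (-(lam • z₂ t) - γ • gradient L (z₁ t)) t) :
    ∀ t, 0 ≤ t →
      (γ * (L (z₁ t) - L zs)
          + (1 / 2) * ‖(m * α * γ / lam) • (z₁ t - zs) + z₂ t‖ ^ 2
          + ((m * α * γ / lam) * ((m * α * γ / lam) - lam) / 2)
              * ‖z₁ t - zs‖ ^ 2)
        ≤ (γ * (L (z₁ 0) - L zs)
            + (1 / 2) * ‖(m * α * γ / lam) • (z₁ 0 - zs) + z₂ 0‖ ^ 2
            + ((m * α * γ / lam) * ((m * α * γ / lam) - lam) / 2)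
                * ‖z₁ 0 - zs‖ ^ 2)
          * Real.exp
              (-(min ((1 - m) * (m * α * γ / lam)) (2 * (lam - m * α * γ / lam)))
                * t) ∧
      L (z₁ t) - L zs
        ≤ ((γ * (L (z₁ 0) - L zs)
            + (1 / 2) * ‖(m * α * γ / lam) • (z₁ 0 - zs) + z₂ 0‖ ^ 2
            + ((m * α * γ / lam) * ((m * α * γ / lam) - lam) / 2)
                * ‖z₁ 0 - zs‖ ^ 2) / ((1 - m) * γ))
          * Real.exp
              (-(min ((1 - m) * (m * α * γ / lam)) (2 * (lam - m * α * γ / lam)))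
                * t) :=
  heavyBall_exponential_rate_general L hC1 hconv zs α hα hQG lam γ m hlam hγ hm0 hm1 hψlt z₁ z₂ hz₁
    hz₂
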